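/- For any $s \ge 1$ and dimensions $d_1, d_2$, the set $\mathbb{B}_{nuc}(\sqrt{s}) \cap \mathbb{B}_F(1)$ of matrices in $\mathbb{R}^{d_1 \times d_2}$ with nuclear norm at most $\sqrt{s}$ and Frobenius norm at most $1$ is contained in $3\, \mathrm{cl}\{\mathrm{conv}\{\mathbb{B}_{rank}(s) \cap \mathbb{B}_F(1)\}\}$, three times the closed convex hull of the set of matrices with rank at most $s$ and Frobenius norm at most $1$. -/

import Mathlib

open scoped BigOperators Pointwise
open Matrix

/-- Frobenius norm of a real matrix. -/
noncomputable def frob {m n : ℕ} (A : Matrix (Fin m) (Fin n) ℝ) : ℝ :=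
  Real.sqrt (∑ i, ∑ j, (A i j) ^ 2)

/-- Nuclear norm: the sum of the singular values of `A`, i.e. the sum of the
square roots of the eigenvalues of `Aᵀ A`. -/
noncomputable def nucNorm {m n : ℕ} (A : Matrix (Fin m) (Fin n) ℝ) : ℝ :=
  ∑ i, Real.sqrt ((show (Aᵀ * A).IsHermitian by
    simpa using Matrix.isHermitian_conjTranspose_mul_self A).eigenvalues i)

/-!
Let `(vⱼ)` be an orthonormal eigenbasis of `AᵀA`, so that `A = ∑ⱼ (A vⱼ) vⱼᵀ` with
`‖A vⱼ‖ = σⱼ` the singular values. For any set `G` of indices, `∑_{j ∈ G} (A vⱼ) vⱼᵀ` has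
rank at most `|G|` and Frobenius norm `√(∑_{j ∈ G} σⱼ²)`. Split the indices, by decreasing `σⱼ`,
into consecutive blocks of `k = ⌊s⌋`. The first block has Frobenius norm at most `‖A‖_F ≤ 1`;
each later block has all its `σⱼ` below the average of the previous block, hence Frobenius norm
at most (sum of the `σⱼ` of the previous block) / `√k`. Summing over the blocks puts `A` in
`(1 + ‖A‖_* / √k) • conv(𝔹_rank(k) ∩ 𝔹_F(1))`, and `‖A‖_* / √k ≤ √s / √⌊s⌋ ≤ 2`.
-/

open Finset

theorem Finset.exists_subset_card_eq_forall_mem_sdiff_le {ι α : Type*} [DecidableEq ι]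
    [LinearOrder α] (f : ι → α) {R : Finset ι} {m : ℕ} (hm : m ≤ R.card) :
    ∃ T ⊆ R, T.card = m ∧ ∀ i ∈ T, ∀ j ∈ R \ T, f j ≤ f i := by
  induction m with
  | zero => exact ⟨∅, empty_subset R, card_empty, by simp⟩
  | succ m ih =>
    obtain ⟨T, hTR, hTm, hT⟩ := ih (by omega)
    have hne : (R \ T).Nonempty := by
      rw [← card_pos, card_sdiff_of_subset hTR]
      omega
    obtain ⟨j, hj, hjmax⟩ := exists_max_image (R \ T) f hne
    have hjT : j ∉ T := (mem_sdiff.1 hj).2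
    refine ⟨insert j T, insert_subset (mem_sdiff.1 hj).1 hTR,
      by rw [card_insert_of_notMem hjT, hTm], ?_⟩
    intro i hi l hl
    have hl' : l ∈ R \ T := by
      simp only [mem_sdiff, mem_insert, not_or] at hl ⊢
      exact ⟨hl.1, hl.2.2⟩
    rcases mem_insert.1 hi with rfl | hi
    · exact hjmax l hl'
    · exact hT i hi l hl'

theorem Convex.sum_mem_smul_of_sqrt_sum_sq_le {E ι : Type*} [AddCommGroup E] [Module ℝ E]
    [DecidableEq ι] {D : Set E} (hD : Convex ℝ D) {k : ℕ} (hk : 0 < k) (x : ι → E)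
    {σ : ι → ℝ} (hσ : ∀ i, 0 ≤ σ i)
    (hblock : ∀ G : Finset ι, G.card ≤ k → ∀ c, √(∑ i ∈ G, σ i ^ 2) ≤ c → ∑ i ∈ G, x i ∈ c • D)
    (R : Finset ι) (b : ℝ) (hR : ∀ G ⊆ R, G.card ≤ k → √(∑ i ∈ G, σ i ^ 2) ≤ b) :
    ∑ i ∈ R, x i ∈ (b + (∑ i ∈ R, σ i) / √k) • D := by
  induction R using Finset.strongInduction generalizing b with
  | H R ih =>
  have hb : 0 ≤ b := by simpa using hR ∅ (empty_subset R) (Nat.zero_le k)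
  have hsum : ∀ G : Finset ι, 0 ≤ (∑ i ∈ G, σ i) / √k := fun G =>
    div_nonneg (sum_nonneg fun i _ => hσ i) (Real.sqrt_nonneg k)
  by_cases hRk : R.card ≤ k
  · exact hblock R hRk _ ((hR R subset_rfl hRk).trans (le_add_of_nonneg_right (hsum R)))
  obtain ⟨T, hTR, hTk, htop⟩ := exists_subset_card_eq_forall_mem_sdiff_le σ (not_le.1 hRk).le
  have hk_pos : (0 : ℝ) < k := by exact_mod_cast hk
  -- each `σ j` outside the top block `T` is at most the average of `σ` over `T`
  have hrest : ∀ G ⊆ R \ T, G.card ≤ k → √(∑ i ∈ G, σ i ^ 2) ≤ (∑ i ∈ T, σ i) / √k := by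
    intro G hGR hGk
    have havg : ∀ j ∈ G, k * σ j ≤ ∑ i ∈ T, σ i := fun j hj => by
      simpa [hTk] using card_nsmul_le_sum T σ (σ j) fun i hi => htop i hi j (hGR hj)
    have hsq : ∑ i ∈ G, σ i ^ 2 ≤ ((∑ i ∈ T, σ i) / √k) ^ 2 := by
      have h := sum_le_sum fun j hj => pow_le_pow_left₀ (mul_nonneg hk_pos.le (hσ j)) (havg j hj) 2
      simp only [mul_pow, ← mul_sum, sum_const, nsmul_eq_mul] at h
      have hGk' : (G.card : ℝ) ≤ k := by exact_mod_cast hGk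
      rw [div_pow, Real.sq_sqrt hk_pos.le, le_div_iff₀ hk_pos]
      nlinarith [sq_nonneg (∑ i ∈ T, σ i)]
    exact (Real.sqrt_le_sqrt hsq).trans_eq (Real.sqrt_sq (hsum T))
  have hT := hblock T hTk.le b (hR T hTR hTk.le)
  have hRT := ih (R \ T) (sdiff_ssubset hTR (card_pos.1 (hTk ▸ hk))) _ hrest
  have hsplit := hD.add_smul (add_nonneg (hsum T) (hsum _)) hb ▸ Set.add_mem_add hRT hT
  rw [sum_sdiff hTR] at hsplit
  convert hsplit using 2
  rw [← sum_sdiff hTR]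
  ring

namespace Matrix

theorem rank_sum_vecMulVec_le {ι m n R : Type*} [Fintype n] [CommRing R]
    [StrongRankCondition R] (u : ι → m → R) (v : ι → n → R) (G : Finset ι) :
    (∑ j ∈ G, vecMulVec (u j) (v j)).rank ≤ G.card := by
  have hfactor : ∑ j ∈ G, vecMulVec (u j) (v j) =
      (of fun a (j : G) => u j a) * of fun (j : G) b => v j b := by
    ext a b
    simp [sum_apply, vecMulVec_apply, mul_apply, ← Finset.sum_coe_sort G]
  rw [hfactor]
  exact (rank_mul_le_left _ _).trans ((rank_le_card_width _).trans_eq (Fintype.card_coe G))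

theorem sum_vecMulVec_orthonormalBasis {ι n : Type*} [Fintype ι] [Fintype n] [DecidableEq n]
    (b : OrthonormalBasis ι ℝ (EuclideanSpace ℝ n)) : ∑ j, vecMulVec ⇑(b j) ⇑(b j) = 1 := by
  ext c d
  have h := congrArg (· c) (b.sum_repr' (EuclideanSpace.single d 1))
  simpa [sum_apply, vecMulVec_apply, one_apply, EuclideanSpace.inner_single_right, mul_comm,
    eq_comm] using h

end Matrix

theorem frob_sum_vecMulVec_of_orthonormal {ι : Type*} {m n : ℕ}
    {v : ι → EuclideanSpace ℝ (Fin n)} (hv : Orthonormal ℝ v) (u : ι → Fin m → ℝ)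
    (G : Finset ι) : frob (∑ j ∈ G, vecMulVec (u j) ⇑(v j)) = √(∑ j ∈ G, u j ⬝ᵥ u j) := by
  rw [frob]
  congr 1
  calc ∑ a, ∑ b, (∑ j ∈ G, vecMulVec (u j) ⇑(v j)) a b ^ 2
      = ∑ a, ‖∑ j ∈ G, u j a • v j‖ ^ 2 := by
        simp [EuclideanSpace.norm_sq_eq, Matrix.sum_apply, vecMulVec_apply]
    _ = ∑ a, ∑ j ∈ G, u j a * u j a := by
        refine sum_congr rfl fun a _ => ?_
        rw [← real_inner_self_eq_norm_sq, hv.inner_sum]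
        simp only [conj_trivial]
    _ = ∑ j ∈ G, u j ⬝ᵥ u j := sum_comm

theorem frob_nonneg {m n : ℕ} (A : Matrix (Fin m) (Fin n) ℝ) : 0 ≤ frob A := Real.sqrt_nonneg _

theorem frob_smul {m n : ℕ} (c : ℝ) (A : Matrix (Fin m) (Fin n) ℝ) :
    frob (c • A) = |c| * frob A := by
  simp only [frob, Matrix.smul_apply, smul_eq_mul, mul_pow, ← mul_sum]
  rw [Real.sqrt_mul (sq_nonneg c), Real.sqrt_sq_eq_abs]

theorem frob_eq_zero {m n : ℕ} {A : Matrix (Fin m) (Fin n) ℝ} : frob A = 0 ↔ A = 0 := by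
  refine ⟨fun h ↦ ?_, fun h ↦ by simp [h, frob]⟩
  have hsum : ∑ i, ∑ j, A i j ^ 2 = 0 := (Real.sqrt_eq_zero (by positivity)).1 h
  rw [Fintype.sum_eq_zero_iff_of_nonneg fun i ↦ by positivity] at hsum
  ext i j
  have hrow := congrFun hsum i
  rw [Pi.zero_apply, Fintype.sum_eq_zero_iff_of_nonneg fun j ↦ sq_nonneg _] at hrow
  simpa using congrFun hrow j

theorem mem_smul_setOf_rank_le_frob_le_one {m n k : ℕ} {c : ℝ} {X : Matrix (Fin m) (Fin n) ℝ}
    (hX : X.rank ≤ k) (hc : frob X ≤ c) :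
    X ∈ c • {Y : Matrix (Fin m) (Fin n) ℝ | Y.rank ≤ k ∧ frob Y ≤ 1} := by
  rcases ((frob_nonneg X).trans hc).eq_or_lt with rfl | hc0
  · obtain rfl : X = 0 := frob_eq_zero.1 (hc.antisymm (frob_nonneg X))
    exact ⟨0, ⟨by simp, by simp [frob]⟩, smul_zero 0⟩
  refine ⟨c⁻¹ • X, ⟨?_, ?_⟩, smul_inv_smul₀ hc0.ne' X⟩
  · rwa [rank_smul_of_mem_nonZeroDivisors X
      (mem_nonZeroDivisors_of_ne_zero (inv_ne_zero hc0.ne'))]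
  · rw [frob_smul, abs_of_pos (inv_pos.2 hc0), inv_mul_le_iff₀ hc0, mul_one]
    exact hc

namespace Matrix

variable {d₁ d₂ : ℕ} (A : Matrix (Fin d₁) (Fin d₂) ℝ)

theorem isHermitian_transpose_mul_self : (Aᵀ * A).IsHermitian := by
  simpa using isHermitian_conjTranspose_mul_self A

noncomputable def singularValue (j : Fin d₂) : ℝ :=
  √((isHermitian_transpose_mul_self A).eigenvalues j)

noncomputable def rightSingularVector (j : Fin d₂) : EuclideanSpace ℝ (Fin d₂) :=
  (isHermitian_transpose_mul_self A).eigenvectorBasis j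

theorem orthonormal_rightSingularVector : Orthonormal ℝ (rightSingularVector A) :=
  (isHermitian_transpose_mul_self A).eigenvectorBasis.orthonormal

noncomputable def svdTerm (j : Fin d₂) : Matrix (Fin d₁) (Fin d₂) ℝ :=
  vecMulVec (A *ᵥ ⇑(rightSingularVector A j)) ⇑(rightSingularVector A j)

theorem singularValue_nonneg (j : Fin d₂) : 0 ≤ singularValue A j := Real.sqrt_nonneg _

theorem nucNorm_eq_sum_singularValue : nucNorm A = ∑ j, singularValue A j := rfl

theorem sum_svdTerm : ∑ j, svdTerm A j = A := by
  simp_rw [svdTerm, ← mul_vecMulVec]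
  rw [← Matrix.mul_sum]
  exact (congrArg (A * ·) (sum_vecMulVec_orthonormalBasis _)).trans (Matrix.mul_one A)

theorem dotProduct_mulVec_rightSingularVector_self (j : Fin d₂) :
    (A *ᵥ ⇑(rightSingularVector A j)) ⬝ᵥ (A *ᵥ ⇑(rightSingularVector A j)) =
      singularValue A j ^ 2 := by
  have hnonneg : 0 ≤ (isHermitian_transpose_mul_self A).eigenvalues j :=
    eigenvalues_conjTranspose_mul_self_nonneg A j
  have hunit : ⇑(rightSingularVector A j) ⬝ᵥ ⇑(rightSingularVector A j) = 1 := by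
    have h := (isHermitian_transpose_mul_self A).eigenvectorBasis.inner_eq_one j
    rwa [EuclideanSpace.inner_eq_star_dotProduct, star_trivial] at h
  rw [singularValue, Real.sq_sqrt hnonneg, ← dotProduct_transpose_mulVec, mulVec_mulVec,
    rightSingularVector, (isHermitian_transpose_mul_self A).mulVec_eigenvectorBasis j,
    dotProduct_smul, ← rightSingularVector, hunit, smul_eq_mul, mul_one]

theorem frob_sum_svdTerm (G : Finset (Fin d₂)) :
    frob (∑ j ∈ G, svdTerm A j) = √(∑ j ∈ G, singularValue A j ^ 2) := by
  simp_rw [svdTerm, frob_sum_vecMulVec_of_orthonormal (orthonormal_rightSingularVector A),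
    dotProduct_mulVec_rightSingularVector_self]

theorem rank_sum_svdTerm_le (G : Finset (Fin d₂)) : (∑ j ∈ G, svdTerm A j).rank ≤ G.card :=
  rank_sum_vecMulVec_le _ _ G

end Matrix

theorem Real.sqrt_le_two_mul_sqrt_natFloor {s : ℝ} (hs : 1 ≤ s) : √s ≤ 2 * √(⌊s⌋₊ : ℝ) := by
  have h1 : (1 : ℝ) ≤ ⌊s⌋₊ := by exact_mod_cast Nat.one_le_floor_iff _ |>.2 hs
  have h2 := Nat.lt_floor_add_one s
  calc √s ≤ √(2 ^ 2 * ⌊s⌋₊) := Real.sqrt_le_sqrt (by linarith)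
    _ = 2 * √(⌊s⌋₊ : ℝ) := by rw [Real.sqrt_mul (by norm_num), Real.sqrt_sq (by norm_num)]

/-- `𝔹_nuc(√s) ∩ 𝔹_F(1) ⊆ 3 · cl conv (𝔹_rank(s) ∩ 𝔹_F(1))`. -/
theorem nuclear_ball_subset_conv_rank_ball (d₁ d₂ : ℕ) (s : ℝ) (hs : 1 ≤ s) :
    {A : Matrix (Fin d₁) (Fin d₂) ℝ | nucNorm A ≤ Real.sqrt s ∧ frob A ≤ 1} ⊆
      (3 : ℝ) • closure (convexHull ℝ
        {A : Matrix (Fin d₁) (Fin d₂) ℝ | A.rank ≤ ⌊s⌋₊ ∧ frob A ≤ 1}) := by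
  rintro A ⟨hnuc, hfrob⟩
  set k := ⌊s⌋₊
  set D := convexHull ℝ {B : Matrix (Fin d₁) (Fin d₂) ℝ | B.rank ≤ k ∧ frob B ≤ 1}
  set tail := (∑ j, singularValue A j) / √(k : ℝ)
  refine Set.smul_set_mono subset_closure ?_
  have hk : 0 < k := Nat.floor_pos.2 hs
  have htail : tail ≤ 2 := by
    rw [div_le_iff₀ (by positivity), ← nucNorm_eq_sum_singularValue]
    exact hnuc.trans (Real.sqrt_le_two_mul_sqrt_natFloor hs)
  have hA := (convex_convexHull ℝ _).sum_mem_smul_of_sqrt_sum_sq_le (D := D) hk (svdTerm A)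
    (singularValue_nonneg A) ?_ univ (3 - tail) ?_
  · rwa [sum_svdTerm, sub_add_cancel] at hA
  · intro G hG c hc
    exact Set.smul_set_mono (subset_convexHull ℝ _) (mem_smul_setOf_rank_le_frob_le_one
      ((rank_sum_svdTerm_le A G).trans hG) ((frob_sum_svdTerm A G).trans_le hc))
  · intro G _ _
    calc √(∑ j ∈ G, singularValue A j ^ 2) ≤ √(∑ j, singularValue A j ^ 2) :=
          Real.sqrt_le_sqrt <| sum_le_sum_of_subset_of_nonneg (subset_univ G) fun _ _ _ ↦
            sq_nonneg _
      _ = frob A := by rw [← frob_sum_svdTerm, sum_svdTerm]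
      _ ≤ 3 - tail := by linarith
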